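/- arXiv:1803.05690 — 4 statements merged into one kernel-verified Lean document; each statement's English description precedes it below -/
import Mathlib

section
/- Small-jump term bound in the Lyapunov computation: Let z > 1 be real, q ≥ 1, k ≥ 1 and C ≥ 0 natural numbers, and λ⁺, λ⁻ ≥ 0 reals. Then λ⁺·(z^{max(q+k−C,0)} − z^{max(q−C,0)}) + λ⁻·(z^{max(q−k−C,0)} − z^{max(q−C,0)}) ≤ λ⁺·𝟙_{q ≤ C+k}·(z^{2k} − 1) + 𝟙_{q > C+k}·(z^{k} − 1)·z^{max(q−C,0)}·(λ⁺ − λ⁻·z^{−k}), where the differences q+k−C, q−C, q−k−C are computed in the integers and 𝟙 denotes an indicator. -/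
/-!
Write `m = q - C`. If `m ≤ k`, the upward jump lands at height at most `2k`, the test function
is at least `1` at `m`, and the downward jump cannot increase it. If `m > k`, none of the three
truncations at `0` is active, so the left side is exactly
`z ^ m * (lp * (z ^ k - 1) + lm * (z⁻¹ ^ k - 1))`, which factors as the right side.
-/

section ClippedGeometric

variable {z : ℝ} (lp lm : ℝ)

theorem jump_sum_le_of_le (hz : 1 ≤ z) (hlp : 0 ≤ lp) (hlm : 0 ≤ lm) {m : ℤ} {k : ℕ}
    (hm : m ≤ k) :
    lp * (z ^ max (m + k) 0 - z ^ max m 0) + lm * (z ^ max (m - k) 0 - z ^ max m 0)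
      ≤ lp * (z ^ (2 * k) - 1) := by
  have up : z ^ max (m + k) 0 ≤ z ^ (2 * k) := by
    rw [← zpow_natCast]
    exact zpow_le_zpow_right₀ hz (by push_cast; omega)
  have one_le : 1 ≤ z ^ max m 0 := one_le_zpow₀ hz (le_max_right _ _)
  have down : z ^ max (m - k) 0 - z ^ max m 0 ≤ 0 :=
    sub_nonpos.mpr (zpow_le_zpow_right₀ hz (max_le_max_right 0 (by omega)))
  calc lp * (z ^ max (m + k) 0 - z ^ max m 0) + lm * (z ^ max (m - k) 0 - z ^ max m 0)
      ≤ lp * (z ^ (2 * k) - 1) + lm * 0 := by gcongr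
    _ = lp * (z ^ (2 * k) - 1) := by rw [mul_zero, add_zero]

theorem jump_sum_eq_of_lt (hz : z ≠ 0) {m : ℤ} {k : ℕ} (hm : (k : ℤ) < m) :
    lp * (z ^ max (m + k) 0 - z ^ max m 0) + lm * (z ^ max (m - k) 0 - z ^ max m 0)
      = (z ^ k - 1) * z ^ max m 0 * (lp - lm * z⁻¹ ^ k) := by
  rw [max_eq_left (by omega), max_eq_left (by omega), max_eq_left (by omega),
    zpow_add₀ hz, zpow_sub₀ hz, zpow_natCast, inv_pow]
  field_simp
  ring

end ClippedGeometric

theorem small_jump_bound_general (z : ℝ) (hz : 1 < z) (q k C : ℕ)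
    (lp lm : ℝ) (hlp : 0 ≤ lp) (hlm : 0 ≤ lm) :
    lp * (z ^ max ((q : ℤ) + k - C) 0 - z ^ max ((q : ℤ) - C) 0)
      + lm * (z ^ max ((q : ℤ) - k - C) 0 - z ^ max ((q : ℤ) - C) 0)
    ≤ lp * (if q ≤ C + k then (1 : ℝ) else 0) * (z ^ (2 * k) - 1)
      + (if C + k < q then (1 : ℝ) else 0) * (z ^ k - 1) * z ^ max ((q : ℤ) - C) 0
          * (lp - lm * z⁻¹ ^ k) := by
  rw [add_sub_right_comm, sub_right_comm (q : ℤ)]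
  by_cases h : q ≤ C + k
  · rw [if_pos h, if_neg (by omega), mul_one, zero_mul, zero_mul, zero_mul, add_zero]
    exact jump_sum_le_of_le lp lm hz.le hlp hlm (by omega)
  · rw [if_neg h, if_pos (by omega), mul_zero, zero_mul, zero_add, one_mul]
    exact (jump_sum_eq_of_lt lp lm (by positivity) (by omega)).le

/-- Small-jump term bound in the Lyapunov computation: the contribution of
insertion and consumption jumps of size `k` to the generator applied to the
geometric test function `x ↦ z ^ max (x - C) 0` (differences computed in `ℤ`). -/
theorem small_jump_bound (z : ℝ) (hz : 1 < z) (q k C : ℕ) (hq : 1 ≤ q) (hk : 1 ≤ k)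
    (lp lm : ℝ) (hlp : 0 ≤ lp) (hlm : 0 ≤ lm) :
    lp * (z ^ max ((q : ℤ) + k - C) 0 - z ^ max ((q : ℤ) - C) 0)
      + lm * (z ^ max ((q : ℤ) - k - C) 0 - z ^ max ((q : ℤ) - C) 0)
    ≤ lp * (if q ≤ C + k then (1 : ℝ) else 0) * (z ^ (2 * k) - 1)
      + (if C + k < q then (1 : ℝ) else 0) * (z ^ k - 1) * z ^ max ((q : ℤ) - C) 0
          * (lp - lm * z⁻¹ ^ k) :=
  small_jump_bound_general z hz q k C lp lm hlp hlm
end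

section
/- Transfer of the negative drift condition to smaller geometric rates: Let (aₙ)_{n≥0} and (bₙ)_{n≥0} be nonnegative real sequences, z₀ > 1 and δ > 0, and assume Σₙ aₙ z₀ⁿ < ∞, Σₙ bₙ < ∞, and Σₙ (z₀ⁿ − 1)(aₙ − bₙ z₀^{−n}) ≤ −δ. Then for every z with 1 < z ≤ z₀: Σₙ (zⁿ − 1)(aₙ − bₙ z^{−n}) ≤ −δ·(z − 1)/(z₀ − 1). -/
/-!
Write the `n`-th drift term as `(zⁿ - 1) aₙ - (1 - z⁻ⁿ) bₙ`. Dividing by `z - 1`, the coefficient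
of `aₙ` is `∑_{i<n} zⁱ`, nondecreasing in `z`, and that of `bₙ` is `∑_{i=1}^n z⁻ⁱ`, nonincreasing
in `z`. Since `aₙ, bₙ ≥ 0`, the drift at rate `z` divided by `z - 1` is termwise at most the drift
at rate `z₀` divided by `z₀ - 1`, and summing gives the claim.
-/

open Finset

lemma pow_sub_one_mul_sub_one_le {z w : ℝ} (hz : 1 ≤ z) (hzw : z ≤ w) (n : ℕ) :
    (z ^ n - 1) * (w - 1) ≤ (w ^ n - 1) * (z - 1) := by
  rw [← geom_sum_mul z n, ← geom_sum_mul w n, mul_right_comm]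
  gcongr
  linarith

lemma one_sub_inv_pow_eq (x : ℝ) (n : ℕ) (hx : x ≠ 0) :
    1 - x⁻¹ ^ n = (x - 1) * (x⁻¹ * ∑ i ∈ range n, x⁻¹ ^ i) := by
  rw [← geom_sum_mul_neg]
  field_simp

lemma one_sub_inv_pow_mul_sub_one_le {z w : ℝ} (hz : 1 ≤ z) (hzw : z ≤ w) (n : ℕ) :
    (1 - w⁻¹ ^ n) * (z - 1) ≤ (1 - z⁻¹ ^ n) * (w - 1) := by
  have hz_pos : 0 < z := by linarith
  have hw_pos : 0 < w := by linarith
  rw [one_sub_inv_pow_eq z n hz_pos.ne', one_sub_inv_pow_eq w n hw_pos.ne', mul_right_comm,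
    mul_right_comm (z - 1), mul_comm (w - 1)]
  have hwz : w⁻¹ ≤ z⁻¹ := inv_anti₀ hz_pos hzw
  gcongr
  exact mul_nonneg (by linarith) (by linarith)

lemma pow_sub_one_mul_sub_mul_inv_pow {x : ℝ} (hx : x ≠ 0) (n : ℕ) (A B : ℝ) :
    (x ^ n - 1) * (A - B * x⁻¹ ^ n) = A * (x ^ n - 1) - B * (1 - x⁻¹ ^ n) := by
  have hxn : x ^ n * x⁻¹ ^ n = 1 := by rw [← mul_pow, mul_inv_cancel₀ hx, one_pow]
  linear_combination (-B) * hxn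

lemma drift_term_le {z w : ℝ} (hz : 1 < z) (hzw : z ≤ w) (n : ℕ) {A B : ℝ}
    (hA : 0 ≤ A) (hB : 0 ≤ B) :
    (z ^ n - 1) * (A - B * z⁻¹ ^ n) ≤ (z - 1) / (w - 1) * ((w ^ n - 1) * (A - B * w⁻¹ ^ n)) := by
  have hw : 0 < w - 1 := by linarith
  rw [pow_sub_one_mul_sub_mul_inv_pow (by positivity),
    pow_sub_one_mul_sub_mul_inv_pow (by linarith : w ≠ 0), div_mul_eq_mul_div, le_div_iff₀ hw]
  have ha := mul_le_mul_of_nonneg_left (pow_sub_one_mul_sub_one_le hz.le hzw n) hA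
  have hb := mul_le_mul_of_nonneg_left (one_sub_inv_pow_mul_sub_one_le hz.le hzw n) hB
  linear_combination ha + hb

lemma summable_drift {a b : ℕ → ℝ} (ha : ∀ n, 0 ≤ a n) (hb : ∀ n, 0 ≤ b n) {z z₀ : ℝ}
    (hsa : Summable fun n => a n * z₀ ^ n) (hsb : Summable b) (hz : 1 ≤ z) (hzz₀ : z ≤ z₀) :
    Summable fun n => (z ^ n - 1) * (a n - b n * z⁻¹ ^ n) := by
  simp_rw [pow_sub_one_mul_sub_mul_inv_pow (show z ≠ 0 by positivity)]
  refine (hsa.of_nonneg_of_le (fun n => ?_) fun n => ?_).sub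
    (hsb.of_nonneg_of_le (fun n => ?_) fun n => ?_)
  · exact mul_nonneg (ha n) (sub_nonneg.2 (one_le_pow₀ hz))
  · exact mul_le_mul_of_nonneg_left
      ((sub_le_self _ zero_le_one).trans (pow_le_pow_left₀ (by positivity) hzz₀ n)) (ha n)
  · exact mul_nonneg (hb n) (sub_nonneg.2 (pow_le_one₀ (by positivity) (inv_le_one_of_one_le₀ hz)))
  · exact mul_le_of_le_one_right (hb n) (sub_le_self _ (by positivity))

theorem drift_transfer_general (a b : ℕ → ℝ) (ha : ∀ n, 0 ≤ a n) (hb : ∀ n, 0 ≤ b n)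
    (z₀ δ : ℝ)
    (hsa : Summable (fun n => a n * z₀ ^ n)) (hsb : Summable b)
    (hdrift : ∑' n : ℕ, (z₀ ^ n - 1) * (a n - b n * z₀⁻¹ ^ n) ≤ -δ) :
    ∀ z : ℝ, 1 < z → z ≤ z₀ →
      ∑' n : ℕ, (z ^ n - 1) * (a n - b n * z⁻¹ ^ n) ≤ -δ * (z - 1) / (z₀ - 1) := by
  intro z hz hzz₀
  have hc : 0 ≤ (z - 1) / (z₀ - 1) := div_nonneg (by linarith) (by linarith)
  calc ∑' n : ℕ, (z ^ n - 1) * (a n - b n * z⁻¹ ^ n)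
      ≤ ∑' n : ℕ, (z - 1) / (z₀ - 1) * ((z₀ ^ n - 1) * (a n - b n * z₀⁻¹ ^ n)) :=
        Summable.tsum_le_tsum (fun n => drift_term_le hz hzz₀ n (ha n) (hb n))
          (summable_drift ha hb hsa hsb hz.le hzz₀)
          ((summable_drift ha hb hsa hsb (hz.le.trans hzz₀) le_rfl).mul_left _)
    _ = (z - 1) / (z₀ - 1) * ∑' n : ℕ, (z₀ ^ n - 1) * (a n - b n * z₀⁻¹ ^ n) := tsum_mul_left
    _ ≤ (z - 1) / (z₀ - 1) * -δ := mul_le_mul_of_nonneg_left hdrift hc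
    _ = -δ * (z - 1) / (z₀ - 1) := by ring

/-- Transfer of the negative drift condition to smaller geometric rates. -/
theorem drift_transfer (a b : ℕ → ℝ) (ha : ∀ n, 0 ≤ a n) (hb : ∀ n, 0 ≤ b n)
    (z₀ δ : ℝ) (hz₀ : 1 < z₀) (hδ : 0 < δ)
    (hsa : Summable (fun n => a n * z₀ ^ n)) (hsb : Summable b)
    (hdrift : ∑' n : ℕ, (z₀ ^ n - 1) * (a n - b n * z₀⁻¹ ^ n) ≤ -δ) :
    ∀ z : ℝ, 1 < z → z ≤ z₀ →
      ∑' n : ℕ, (z ^ n - 1) * (a n - b n * z⁻¹ ^ n) ≤ -δ * (z - 1) / (z₀ - 1) :=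
  drift_transfer_general a b ha hb z₀ δ hsa hsb hdrift
end

section
/- Inverse Hölder inequality for −x log x: Let φ : [0, e^{−1}] → [0, e^{−1}] be defined by φ(x) = −x·log x (with φ(0) = 0); φ is a strictly increasing continuous bijection of [0, e^{−1}] onto itself, and for every p > 1 there exists a constant R > 0 such that its inverse s¹ = φ^{−1} satisfies |a − b|^p ≤ R·|s¹(a) − s¹(b)| for all a, b ∈ [0, e^{−1}]. -/
/-!
On `[0, e⁻¹]` the derivative `-log x - 1` of `φ = negMulLog` is positive, so `φ` is an increasing
continuous map fixing both endpoints, hence a bijection of the interval. For the Hölder bound,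
`φ` is subadditive on `[0, ∞)`, so `|φ x - φ y| ≤ φ |x - y|`, and `log t ≤ t ^ ε / ε` applied to
`t = 1 / x` gives `φ x ≤ x ^ (1 / p) · p / (p - 1)`, i.e. `φ x ^ p ≤ (p / (p - 1)) ^ p · x`.
-/

open Set

namespace Real

lemma negMulLog_exp_neg_one : negMulLog (exp (-1)) = exp (-1) := by
  simp [negMulLog]

lemma strictMonoOn_negMulLog : StrictMonoOn negMulLog (Icc 0 (exp (-1))) := by
  refine strictMonoOn_of_deriv_pos (convex_Icc _ _) continuous_negMulLog.continuousOn ?_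
  intro x hx
  rw [interior_Icc] at hx
  have hlog : log x < -1 := by simpa using log_lt_log hx.1 hx.2
  rw [deriv_negMulLog hx.1.ne']
  linarith

lemma image_negMulLog_Icc : negMulLog '' Icc 0 (exp (-1)) = Icc 0 (exp (-1)) := by
  rw [continuous_negMulLog.continuousOn.image_Icc_of_monotoneOn (exp_pos _).le
    strictMonoOn_negMulLog.monotoneOn, negMulLog_zero, negMulLog_exp_neg_one]

lemma bijOn_negMulLog : BijOn negMulLog (Icc 0 (exp (-1))) (Icc 0 (exp (-1))) := by
  simpa only [image_negMulLog_Icc] using strictMonoOn_negMulLog.injOn.bijOn_image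

lemma negMulLog_add_le {x y : ℝ} (hx : 0 ≤ x) (hy : 0 ≤ y) :
    negMulLog (x + y) ≤ negMulLog x + negMulLog y := by
  rcases hx.eq_or_lt with rfl | hx
  · simp
  rcases hy.eq_or_lt with rfl | hy
  · simp
  have hlogx : x * log x ≤ x * log (x + y) := by gcongr; linarith
  have hlogy : y * log y ≤ y * log (x + y) := by gcongr; linarith
  simp only [negMulLog, neg_mul]
  linarith

lemma abs_negMulLog_sub_le {x y : ℝ} (hx : x ∈ Icc 0 (exp (-1))) (hy : y ∈ Icc 0 (exp (-1))) :
    |negMulLog x - negMulLog y| ≤ negMulLog |x - y| := by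
  wlog hxy : x ≤ y generalizing x y
  · rw [abs_sub_comm, abs_sub_comm x]
    exact this hy hx (le_of_not_ge hxy)
  have hmono : negMulLog x ≤ negMulLog y := strictMonoOn_negMulLog.monotoneOn hx hy hxy
  have hsub := negMulLog_add_le hx.1 (sub_nonneg.2 hxy)
  rw [add_sub_cancel] at hsub
  rw [abs_sub_comm, abs_of_nonneg (sub_nonneg.2 hmono), abs_sub_comm,
    abs_of_nonneg (sub_nonneg.2 hxy)]
  linarith

lemma negMulLog_le_rpow_div {x ε : ℝ} (hx : 0 ≤ x) (hε : 0 < ε) :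
    negMulLog x ≤ x ^ (1 - ε) / ε := by
  rcases hx.eq_or_lt with rfl | hx
  · rw [negMulLog_zero]
    positivity
  calc negMulLog x = x * log x⁻¹ := by rw [negMulLog, log_inv, neg_mul, mul_neg]
    _ ≤ x * (x⁻¹ ^ ε / ε) := by gcongr; exact log_le_rpow_div (by positivity) hε
    _ = x ^ (1 - ε) / ε := by
      rw [inv_rpow hx.le, ← rpow_neg hx.le, mul_div_assoc', sub_eq_add_neg, rpow_add hx,
        rpow_one]

lemma negMulLog_rpow_le {x p : ℝ} (hp : 1 < p) (hx₀ : 0 ≤ x) (hx₁ : x ≤ 1) :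
    negMulLog x ^ p ≤ (p / (p - 1)) ^ p * x := by
  have hp₀ : 0 < p := by linarith
  have hε : 0 < (p - 1) / p := div_pos (by linarith) hp₀
  have hbound : negMulLog x ≤ x ^ p⁻¹ * (p / (p - 1)) := by
    have h := negMulLog_le_rpow_div hx₀ hε
    rwa [one_sub_div hp₀.ne', sub_sub_cancel, one_div, div_eq_mul_inv, inv_div] at h
  calc negMulLog x ^ p ≤ (x ^ p⁻¹ * (p / (p - 1))) ^ p :=
        rpow_le_rpow (negMulLog_nonneg hx₀ hx₁) hbound hp₀.le
    _ = (p / (p - 1)) ^ p * x := by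
      rw [mul_rpow (by positivity) (div_pos hp₀ (by linarith)).le, rpow_inv_rpow hx₀ hp₀.ne',
        mul_comm]

end Real

open Real in
/-- Inverse Hölder inequality for `φ x = -x log x` on `[0, e⁻¹]`: `φ` is a
strictly increasing continuous bijection of `[0, e⁻¹]` onto itself, and for
every `p > 1` there is `R > 0` such that the inverse `s¹ = φ⁻¹` satisfies
`|a - b| ^ p ≤ R * |s¹ a - s¹ b|` for all `a, b ∈ [0, e⁻¹]` (stated via
`a = φ x`, `b = φ y`). -/
theorem inverse_holder_neg_mul_log (φ : ℝ → ℝ)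
    (hφ : ∀ x, φ x = -x * Real.log x) :
    StrictMonoOn φ (Set.Icc 0 (Real.exp (-1))) ∧
    ContinuousOn φ (Set.Icc 0 (Real.exp (-1))) ∧
    Set.BijOn φ (Set.Icc 0 (Real.exp (-1))) (Set.Icc 0 (Real.exp (-1))) ∧
    ∀ p : ℝ, 1 < p → ∃ R : ℝ, 0 < R ∧
      ∀ x ∈ Set.Icc (0 : ℝ) (Real.exp (-1)), ∀ y ∈ Set.Icc (0 : ℝ) (Real.exp (-1)),
        |φ x - φ y| ^ p ≤ R * |x - y| := by
  obtain rfl : φ = negMulLog := funext hφ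
  refine ⟨strictMonoOn_negMulLog, continuous_negMulLog.continuousOn, bijOn_negMulLog,
    fun p hp ↦ ⟨(p / (p - 1)) ^ p, rpow_pos_of_pos (div_pos (by linarith) (by linarith)) p,
      fun x hx y hy ↦ ?_⟩⟩
  have hexp : exp (-1) ≤ 1 := exp_le_one_iff.2 (by norm_num)
  have hdist : |x - y| ≤ 1 :=
    abs_sub_le_of_nonneg_of_le hx.1 (hx.2.trans hexp) hy.1 (hy.2.trans hexp)
  calc |negMulLog x - negMulLog y| ^ p ≤ negMulLog |x - y| ^ p :=
        rpow_le_rpow (abs_nonneg _) (abs_negMulLog_sub_le hx hy) (by linarith)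
    _ ≤ (p / (p - 1)) ^ p * |x - y| := negMulLog_rpow_le hp (abs_nonneg _) hdist
end

section
/- Invertibility of a weakly chained sub-generator matrix: Let M be an n×n real matrix such that M_{i,j} ≥ 0 for all i ≠ j and the row sums r_i = Σ_j M_{i,j} satisfy r_i ≤ 0 for every i. Assume moreover that for every index i there exists a finite sequence i = i₀, i₁, …, i_m such that M_{i_t, i_{t+1}} > 0 for each t < m and r_{i_m} < 0. Then M is invertible. -/
/-!
Suppose `M *ᵥ u = 0` with `u ≠ 0`; replacing `u` by `-u` we may assume `u` has a positive entry,
and we look at an index `i` where `u` is maximal. Then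
`0 ≤ ∑ j, M i j * (u i - u j) = u i * (∑ j, M i j) ≤ 0`,
so row `i` sums to zero and `u j = u i` whenever `M i j > 0`: the maximum propagates along
positive entries. Following a chain from `i` to a row with negative sum gives a contradiction.
-/

theorem apply_of_chain {α : Type*} {R : α → α → Prop} {P : α → Prop}
    (hP : ∀ a b, P a → R a b → P b) {p : ℕ → α} {m : ℕ}
    (hp : ∀ t < m, R (p t) (p (t + 1))) (h0 : P (p 0)) : P (p m) := by
  induction m with
  | zero => exact h0
  | succ m ih => exact hP _ _ (ih fun t ht => hp t (by omega)) (hp m (by omega))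

namespace Matrix

variable {ι : Type*} {M : Matrix ι ι ℝ} {u : ι → ℝ} {i : ι}

theorem mul_sub_nonneg_of_isMax (hoff : ∀ i j, i ≠ j → 0 ≤ M i j) (hmax : ∀ j, u j ≤ u i)
    (j : ι) : 0 ≤ M i j * (u i - u j) := by
  rcases eq_or_ne i j with rfl | hij
  · simp
  · exact mul_nonneg (hoff i j hij) (sub_nonneg.mpr (hmax j))

variable [Fintype ι]

theorem sum_mul_sub_eq (M : Matrix ι ι ℝ) (u : ι → ℝ) (i : ι) :
    ∑ j, M i j * (u i - u j) = u i * ∑ j, M i j - (M *ᵥ u) i := by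
  simp only [mulVec, dotProduct, mul_sub, Finset.sum_sub_distrib, Finset.mul_sum, mul_comm]

theorem sum_mul_sub_eq_zero_of_isMax (hoff : ∀ i j, i ≠ j → 0 ≤ M i j)
    (hrow : ∑ j, M i j ≤ 0) (hMu : 0 ≤ (M *ᵥ u) i) (hpos : 0 < u i) (hmax : ∀ j, u j ≤ u i) :
    ∑ j, M i j * (u i - u j) = 0 := by
  have hnonneg := Finset.sum_nonneg fun j (_ : j ∈ Finset.univ) =>
    mul_sub_nonneg_of_isMax hoff hmax j
  have := mul_nonpos_of_nonneg_of_nonpos hpos.le hrow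
  linarith [sum_mul_sub_eq M u i]

theorem rowSum_eq_zero_of_isMax (hoff : ∀ i j, i ≠ j → 0 ≤ M i j)
    (hrow : ∑ j, M i j ≤ 0) (hMu : 0 ≤ (M *ᵥ u) i) (hpos : 0 < u i) (hmax : ∀ j, u j ≤ u i) :
    ∑ j, M i j = 0 := by
  have hgap := sum_mul_sub_eq_zero_of_isMax hoff hrow hMu hpos hmax
  rw [sum_mul_sub_eq] at hgap
  have : 0 ≤ ∑ j, M i j := nonneg_of_mul_nonneg_right (by linarith) hpos
  linarith

theorem eq_of_pos_of_isMax (hoff : ∀ i j, i ≠ j → 0 ≤ M i j)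
    (hrow : ∑ j, M i j ≤ 0) (hMu : 0 ≤ (M *ᵥ u) i) (hpos : 0 < u i) (hmax : ∀ j, u j ≤ u i)
    {j : ι} (hij : 0 < M i j) : u j = u i := by
  have hterm := (Finset.sum_eq_zero_iff_of_nonneg fun j _ =>
    mul_sub_nonneg_of_isMax hoff hmax j).mp
    (sum_mul_sub_eq_zero_of_isMax hoff hrow hMu hpos hmax) j (Finset.mem_univ j)
  linarith [(mul_eq_zero.mp hterm).resolve_left hij.ne']

theorem exists_mulVec_eq_zero_pos [DecidableEq ι] (hM : ¬IsUnit M) :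
    ∃ u, M *ᵥ u = 0 ∧ ∃ k, 0 < u k := by
  rw [isUnit_iff_isUnit_det, isUnit_iff_ne_zero, not_not,
    ← exists_mulVec_eq_zero_iff] at hM
  obtain ⟨v, hv, hMv⟩ := hM
  obtain ⟨k, hk⟩ := Function.ne_iff.mp hv
  rcases hk.lt_or_gt with hneg | hpos
  · exact ⟨-v, by rw [mulVec_neg, hMv, neg_zero], k, by simpa using hneg⟩
  · exact ⟨v, hMv, k, hpos⟩

theorem isUnit_of_weaklyChained [DecidableEq ι] (hoff : ∀ i j, i ≠ j → 0 ≤ M i j)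
    (hrow : ∀ i, ∑ j, M i j ≤ 0)
    (hchain : ∀ i, ∃ m : ℕ, ∃ p : ℕ → ι, p 0 = i ∧
      (∀ t < m, 0 < M (p t) (p (t + 1))) ∧ ∑ j, M (p m) j < 0) :
    IsUnit M := by
  by_contra hM
  obtain ⟨u, hMu, k, hk⟩ := exists_mulVec_eq_zero_pos hM
  have : Nonempty ι := ⟨k⟩
  obtain ⟨i₀, hi₀⟩ := Finite.exists_max u
  have hpos : 0 < u i₀ := hk.trans_le (hi₀ k)
  have hMu_nonneg : ∀ i, 0 ≤ (M *ᵥ u) i := fun i => by simp [hMu]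
  have hmax_closed : ∀ i j, u i = u i₀ → 0 < M i j → u j = u i₀ := fun i j hi hij =>
    (eq_of_pos_of_isMax hoff (hrow i) (hMu_nonneg i) (hi ▸ hpos) (hi ▸ hi₀) hij).trans hi
  obtain ⟨m, p, hp0, hstep, hneg⟩ := hchain i₀
  have hpm : u (p m) = u i₀ := apply_of_chain hmax_closed hstep (by rw [hp0])
  linarith [rowSum_eq_zero_of_isMax hoff (hrow (p m)) (hMu_nonneg (p m))
    (hpm ▸ hpos) (hpm ▸ hi₀)]

end Matrix

/-- Invertibility of a weakly chained sub-generator matrix: a real square matrix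
with nonnegative off-diagonal entries and nonpositive row sums, in which every
index is connected through entries `> 0` to an index with strictly negative row
sum, is invertible. -/
theorem weakly_chained_subgenerator_invertible (n : ℕ)
    (M : Matrix (Fin n) (Fin n) ℝ)
    (hoff : ∀ i j : Fin n, i ≠ j → 0 ≤ M i j)
    (hrow : ∀ i : Fin n, ∑ j, M i j ≤ 0)
    (hchain : ∀ i : Fin n, ∃ m : ℕ, ∃ p : ℕ → Fin n, p 0 = i ∧
      (∀ t < m, 0 < M (p t) (p (t + 1))) ∧ ∑ j, M (p m) j < 0) :
    IsUnit M :=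
  Matrix.isUnit_of_weaklyChained hoff hrow hchain
end
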